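/- arXiv:math/0101113 — 3 statements merged into one kernel-verified Lean document; each statement's English description precedes it below -/
import Mathlib

section
/- For λ ∈ ℂ, if u(ℓ,m) = ℓ^λ φ(m/ℓ) is a homogeneous function of degree λ (with φ twice differentiable on a suitable interval and ℓ > 0), then u satisfies the reduced hyperbolic Tricomi equation ∂²u/∂ℓ∂m - (1/(6(ℓ-m)))(∂u/∂ℓ - ∂u/∂m) = 0 if and only if φ satisfies the hypergeometric equation t(1-t)φ''(t) + [(5/6 - λ) - (7/6 - λ)t]φ'(t) + (λ/6)φ(t) = 0 at t = m/ℓ. -/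
lemma tricomi_algebra_aux (a b P lam p0 p1 p2 : ℂ)
    (ha : a ≠ 0) (hab : a - b ≠ 0) (hP : P ≠ 0) :
    ((lam * (P / a) * a⁻¹ + P * -((a ^ 2)⁻¹)) * p1
        + P * a⁻¹ * (b * -((a ^ 2)⁻¹) * p2))
      - 1 / (6 * (a - b)) *
        ((lam * (P / a) * p0 + P * (b * -((a ^ 2)⁻¹) * p1)) - P * a⁻¹ * p1) = 0
    ↔ b / a * (1 - b / a) * p2 + ((5/6 - lam) - (7/6 - lam) * (b / a)) * p1
        + lam / 6 * p0 = 0 := by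
  have key : ((lam * (P / a) * a⁻¹ + P * -((a ^ 2)⁻¹)) * p1
        + P * a⁻¹ * (b * -((a ^ 2)⁻¹) * p2))
      - 1 / (6 * (a - b)) *
        ((lam * (P / a) * p0 + P * (b * -((a ^ 2)⁻¹) * p1)) - P * a⁻¹ * p1)
      = (-P * (a * (a - b))⁻¹) *
        (b / a * (1 - b / a) * p2 + ((5/6 - lam) - (7/6 - lam) * (b / a)) * p1
          + lam / 6 * p0) := by
    obtain ⟨c, rfl⟩ : ∃ c, b = a - c := ⟨a - b, by ring⟩
    have hc : c ≠ 0 := by simpa using hab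
    rw [show a - (a - c) = c from by ring]
    linear_combination
      (((-1 : ℂ) * a⁻¹ * c⁻¹ * P * p1) + (a⁻¹ * c⁻¹ * P * lam * p1)
          + ((-1 : ℂ) * a⁻¹ * a⁻¹ * P * p2) + ((2 : ℂ) * c * a⁻¹ * a⁻¹ * c⁻¹ * P * p2)
          + ((-1 : ℂ) * a * a⁻¹ * a⁻¹ * c⁻¹ * P * p2)) * (mul_inv_cancel₀ ha)
        + ((a⁻¹ * a⁻¹ * P * p2) + (a⁻¹ * a⁻¹ * P * p1)
          + ((-1 : ℂ) * a⁻¹ * a⁻¹ * P * lam * p1)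
          + ((-1 : ℂ) * c * a⁻¹ * a⁻¹ * a⁻¹ * P * p2)) * (mul_inv_cancel₀ hc)
  have hC : (-P * (a * (a - b))⁻¹) ≠ 0 :=
    mul_ne_zero (neg_ne_zero.mpr hP) (inv_ne_zero (mul_ne_zero ha hab))
  rw [key, mul_eq_zero, or_iff_right hC]

/-- For `λ ∈ ℂ`, the homogeneous function `u(ℓ,m) = ℓ^λ φ(m/ℓ)` (with `φ` twice
continuously differentiable and `ℓ > 0`, `ℓ > m`) satisfies the reduced hyperbolic
Tricomi equation at `(ℓ,m)` iff `φ` satisfies the hypergeometric equation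
`t(1-t)φ'' + [(5/6-λ) - (7/6-λ)t]φ' + (λ/6)φ = 0` at `t = m/ℓ`. -/
theorem homogeneous_solution_iff_hypergeometric
    (lam : ℂ) (φ : ℝ → ℂ) (hφ : ContDiff ℝ 2 φ)
    (l m : ℝ) (hl : 0 < l) (hlm : m < l)
    (u : ℝ → ℝ → ℂ)
    (hu : ∀ l' m', u l' m' = (l' : ℂ) ^ lam * φ (m' / l')) :
    (deriv (fun l' => deriv (fun m' => u l' m') m) l
        - (1/(6*((l : ℂ) - m))) *
          (deriv (fun l' => u l' m) l - deriv (fun m' => u l m') m) = 0)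
      ↔ ((m/l : ℝ) : ℂ) * (1 - ((m/l : ℝ) : ℂ)) * deriv (deriv φ) (m/l)
          + ((5/6 - lam) - (7/6 - lam) * ((m/l : ℝ) : ℂ)) * deriv φ (m/l)
          + (lam/6) * φ (m/l) = 0 := by
  have hl0 : l ≠ 0 := ne_of_gt hl
  have hlC : (l : ℂ) ≠ 0 := by exact_mod_cast hl0
  have hpow : (l : ℂ) ^ lam ≠ 0 := by
    rw [Complex.cpow_def_of_ne_zero hlC]; exact Complex.exp_ne_zero _
  have hlmC : (l : ℂ) - (m : ℂ) ≠ 0 := by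
    rw [sub_ne_zero]
    exact_mod_cast hlm.ne'
  have hφ1 : Differentiable ℝ φ := hφ.differentiable two_ne_zero
  have hφ2 : Differentiable ℝ (deriv φ) := by
    have h2 : ContDiff ℝ ((1 : ℕ) + 1) φ := by exact_mod_cast hφ
    exact ((contDiff_succ_iff_deriv.mp h2).2.2).differentiable (by norm_num)
  -- derivative of l' ↦ (l':ℂ)^lam
  have hcpow : HasDerivAt (fun y : ℝ => ((y : ℝ) : ℂ) ^ lam)
      (lam * (l : ℂ) ^ (lam - 1) * 1) l := by
    have : HasDerivAt (fun z : ℂ => z ^ lam) (lam * (l : ℂ) ^ (lam - 1) * 1) (l : ℂ) :=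
      (hasDerivAt_id ((l : ℝ) : ℂ)).cpow_const (by
        exact Complex.ofReal_mem_slitPlane.mpr hl)
    exact this.comp_ofReal
  -- derivative of l' ↦ ((l':ℂ))⁻¹
  have hinvC : HasDerivAt (fun y : ℝ => (((y : ℝ) : ℂ))⁻¹) (-(((l : ℂ)) ^ 2)⁻¹) l :=
    (hasDerivAt_inv hlC).comp_ofReal
  -- derivative of l' ↦ m / l'
  have hdiv : HasDerivAt (fun y : ℝ => m / y) (m * -((l ^ 2)⁻¹)) l := by
    simpa [div_eq_mul_inv] using ((hasDerivAt_inv hl0).const_mul m)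
  have hphi_c : HasDerivAt (fun y : ℝ => φ (m / y))
      ((m * -((l ^ 2)⁻¹)) • deriv φ (m / l)) l := by
    simpa [Function.comp_def] using
      HasDerivAt.scomp l (hφ1.differentiableAt.hasDerivAt) hdiv
  have hdphi_c : HasDerivAt (fun y : ℝ => deriv φ (m / y))
      ((m * -((l ^ 2)⁻¹)) • deriv (deriv φ) (m / l)) l := by
    simpa [Function.comp_def] using
      HasDerivAt.scomp l (hφ2.differentiableAt.hasDerivAt) hdiv
  -- inner derivative in m
  have hum : ∀ l' : ℝ, l' ≠ 0 → HasDerivAt (fun m' => u l' m')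
      (((l' : ℝ) : ℂ) ^ lam * ((l'⁻¹ : ℝ) • deriv φ (m / l'))) m := by
    intro l' hl'
    have h1 : HasDerivAt (fun m' : ℝ => m' / l') l'⁻¹ m := by
      simpa using (hasDerivAt_id m).div_const l'
    have h2 : HasDerivAt (fun m' : ℝ => φ (m' / l'))
        ((l'⁻¹ : ℝ) • deriv φ (m / l')) m := by
      simpa [Function.comp_def] using
        HasDerivAt.scomp m (hφ1.differentiableAt.hasDerivAt) h1
    have h3 := h2.const_mul (((l' : ℝ) : ℂ) ^ lam)
    simp only [hu]
    exact h3
  have keym : ∀ l' : ℝ, l' ≠ 0 → deriv (fun m' => u l' m') m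
      = ((l' : ℝ) : ℂ) ^ lam * (((l' : ℝ) : ℂ))⁻¹ * deriv φ (m / l') := by
    intro l' hl'
    rw [(hum l' hl').deriv, Complex.real_smul]
    push_cast
    ring
  have hev : (fun l' => deriv (fun m' => u l' m') m) =ᶠ[nhds l]
      (fun l' : ℝ => ((l' : ℝ) : ℂ) ^ lam * (((l' : ℝ) : ℂ))⁻¹ * deriv φ (m / l')) := by
    filter_upwards [eventually_ne_nhds hl0] with l' hl' using keym l' hl'
  -- the three derivative computations
  have e1 : deriv (fun l' => deriv (fun m' => u l' m') m) l
      = (lam * ((l : ℂ) ^ lam / (l : ℂ)) * ((l : ℂ))⁻¹ + (l : ℂ) ^ lam * -(((l : ℂ) ^ 2)⁻¹))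
          * deriv φ (m / l)
        + (l : ℂ) ^ lam * ((l : ℂ))⁻¹
          * ((m : ℂ) * -(((l : ℂ) ^ 2)⁻¹) * deriv (deriv φ) (m / l)) := by
    rw [hev.deriv_eq, HasDerivAt.deriv
        (f := fun y : ℝ => ((y : ℝ) : ℂ) ^ lam * (((y : ℝ) : ℂ))⁻¹ * deriv φ (m / y))
        ((hcpow.mul hinvC).mul hdphi_c), Complex.real_smul,
      Complex.cpow_sub lam 1 hlC, Complex.cpow_one]
    simp only [Pi.mul_apply]
    push_cast
    ring
  have e2 : deriv (fun l' => u l' m) l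
      = lam * ((l : ℂ) ^ lam / (l : ℂ)) * φ (m / l)
        + (l : ℂ) ^ lam * ((m : ℂ) * -(((l : ℂ) ^ 2)⁻¹) * deriv φ (m / l)) := by
    have h : HasDerivAt (fun l' : ℝ => u l' m)
        (lam * (l : ℂ) ^ (lam - 1) * 1 * φ (m / l)
          + ((l : ℝ) : ℂ) ^ lam * ((m * -((l ^ 2)⁻¹)) • deriv φ (m / l))) l := by
      simp only [hu]
      exact hcpow.mul hphi_c
    rw [h.deriv, Complex.real_smul, Complex.cpow_sub lam 1 hlC, Complex.cpow_one]
    push_cast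
    ring
  have e3 : deriv (fun m' => u l m') m
      = (l : ℂ) ^ lam * ((l : ℂ))⁻¹ * deriv φ (m / l) := keym l hl0
  rw [e1, e2, e3, show ((m / l : ℝ) : ℂ) = (m : ℂ) / (l : ℂ) by push_cast; ring]
  exact tricomi_algebra_aux (l : ℂ) (m : ℂ) ((l : ℂ) ^ lam) lam
    (φ (m / l)) (deriv φ (m / l)) (deriv (deriv φ) (m / l)) hlC hlmC hpow
end

section
/- If v is a twice continuously differentiable solution of the adjoint reduced hyperbolic Tricomi equation ∂²v/∂ℓ∂m + (1/(6(ℓ-m)))(∂v/∂ℓ - ∂v/∂m) - (1/(3(ℓ-m)²))v = 0 on a region where ℓ > m, then u = (ℓ-m)^{-1/3} v is a solution of the reduced hyperbolic Tricomi equation ∂²u/∂ℓ∂m - (1/(6(ℓ-m)))(∂u/∂ℓ - ∂u/∂m) = 0 on that region, and conversely. -/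
/-- On the region `ℓ > m`, `v` solves the adjoint reduced hyperbolic Tricomi equation
iff `u = (ℓ-m)^(-1/3) v` solves the reduced hyperbolic Tricomi equation. -/
theorem adjoint_solution_iff_solution
    (v : ℝ → ℝ → ℝ)
    (hv : ContDiffOn ℝ 2 (fun p : ℝ × ℝ => v p.1 p.2) {p : ℝ × ℝ | p.2 < p.1})
    (u : ℝ → ℝ → ℝ)
    (hu : ∀ l' m', u l' m' = (l' - m') ^ (-(1:ℝ)/3) * v l' m')
    (l m : ℝ) (h : m < l) :
    (deriv (fun l' => deriv (fun m' => v l' m') m) l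
        + (1/(6*(l - m))) *
          (deriv (fun l' => v l' m) l - deriv (fun m' => v l m') m)
        - (1/(3*(l - m)^2)) * v l m = 0)
      ↔ (deriv (fun l' => deriv (fun m' => u l' m') m) l
          - (1/(6*(l - m))) *
            (deriv (fun l' => u l' m) l - deriv (fun m' => u l m') m) = 0) := by
  set F : ℝ × ℝ → ℝ := fun p => v p.1 p.2 with hF
  set S : Set (ℝ × ℝ) := {p : ℝ × ℝ | p.2 < p.1} with hSdef
  have hS : IsOpen S := isOpen_lt continuous_snd continuous_fst
  have hFdiff : ∀ p ∈ S, DifferentiableAt ℝ F p := fun p hp =>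
    (hv.contDiffAt (hS.mem_nhds hp)).differentiableAt (by norm_num)
  -- slice derivatives
  have slice2 : ∀ l' m', m' < l' →
      HasDerivAt (fun t => v l' t) (fderiv ℝ F (l', m') (0, 1)) m' := by
    intro l' m' h'
    have h1 : HasDerivAt (fun t : ℝ => ((l' : ℝ), t)) ((0 : ℝ), (1 : ℝ)) m' :=
      (hasDerivAt_const m' l').prodMk (hasDerivAt_id m')
    exact (hFdiff (l', m') h').hasFDerivAt.comp_hasDerivAt m' h1
  have slice1 : ∀ l' m', m' < l' →
      HasDerivAt (fun t => v t m') (fderiv ℝ F (l', m') (1, 0)) l' := by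
    intro l' m' h'
    have h1 : HasDerivAt (fun t : ℝ => ((t : ℝ), m')) ((1 : ℝ), (0 : ℝ)) l' :=
      (hasDerivAt_id l').prodMk (hasDerivAt_const l' m')
    exact (hFdiff (l', m') h').hasFDerivAt.comp_hasDerivAt l' h1
  -- differentiability of the inner m-derivative as a function of l
  have hfd1 : ContDiffOn ℝ 1 (fderiv ℝ F) S := hv.fderiv_of_isOpen hS (by norm_num)
  have hg : DifferentiableAt ℝ (fun l' : ℝ => fderiv ℝ F (l', m) ((0 : ℝ), (1 : ℝ))) l := by
    have h1 : DifferentiableAt ℝ (fderiv ℝ F) (l, m) :=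
      (hfd1.contDiffAt (hS.mem_nhds h)).differentiableAt one_ne_zero
    have h2 : DifferentiableAt ℝ (fun l' : ℝ => ((l' : ℝ), m)) l :=
      differentiableAt_id.prodMk (differentiableAt_const m)
    exact ((ContinuousLinearMap.apply ℝ ℝ ((0 : ℝ), (1 : ℝ))).differentiableAt).comp l
      ((h1.comp l h2))
  have hev0 : ∀ᶠ l' in nhds l, m < l' :=
    Filter.eventually_of_mem (Ioi_mem_nhds h) (fun l' hl' => hl')
  have hevEq : (fun l' => deriv (fun m' => v l' m') m)
      =ᶠ[nhds l] (fun l' : ℝ => fderiv ℝ F (l', m) ((0 : ℝ), (1 : ℝ))) :=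
    hev0.mono (fun l' hl' => (slice2 l' m hl').deriv)
  have hD12 : DifferentiableAt ℝ (fun l' => deriv (fun m' => v l' m') m) l :=
    hg.congr_of_eventuallyEq hevEq
  -- step 1 : the m-derivative of u
  have step1 : ∀ l', m < l' → deriv (fun m' => u l' m') m
      = (-(1:ℝ)/3 * (l' - m) ^ (-(1:ℝ)/3 - 1) * (-1)) * v l' m
        + (l' - m) ^ (-(1:ℝ)/3) * deriv (fun m' => v l' m') m := by
    intro l' hl'
    have hpos : (0:ℝ) < l' - m := sub_pos.2 hl'
    have hw : HasDerivAt (fun m' : ℝ => (l' - m') ^ (-(1:ℝ)/3))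
        (-(1:ℝ)/3 * (l' - m) ^ (-(1:ℝ)/3 - 1) * (-1)) m := by
      simpa [Function.comp_def] using
        (Real.hasDerivAt_rpow_const (p := -(1:ℝ)/3) (Or.inl hpos.ne')).comp m
          ((hasDerivAt_id m).const_sub l')
    have hvm := slice2 l' m hl'
    have hfun : (fun m' => u l' m') = fun m' => (l' - m') ^ (-(1:ℝ)/3) * v l' m' :=
      funext (hu l')
    rw [hfun, (hw.fun_mul hvm).deriv, hvm.deriv]
  -- derivative of l' ↦ deriv_m u at l
  have hevEq2 : (fun l' => deriv (fun m' => u l' m') m)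
      =ᶠ[nhds l] (fun l' => (-(1:ℝ)/3 * (l' - m) ^ (-(1:ℝ)/3 - 1) * (-1)) * v l' m
        + (l' - m) ^ (-(1:ℝ)/3) * deriv (fun m' => v l' m') m) :=
    hev0.mono (fun l' hl' => step1 l' hl')
  have hpos : (0:ℝ) < l - m := sub_pos.2 h
  have hA : HasDerivAt (fun l' : ℝ => (l' - m) ^ (-(1:ℝ)/3 - 1))
      ((-(1:ℝ)/3 - 1) * (l - m) ^ (-(1:ℝ)/3 - 1 - 1) * 1) l := by
    simpa [Function.comp_def] using
      (Real.hasDerivAt_rpow_const (p := -(1:ℝ)/3 - 1) (Or.inl hpos.ne')).comp l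
        ((hasDerivAt_id l).sub_const m)
  have hC : HasDerivAt (fun l' : ℝ => (l' - m) ^ (-(1:ℝ)/3))
      ((-(1:ℝ)/3) * (l - m) ^ (-(1:ℝ)/3 - 1) * 1) l := by
    simpa [Function.comp_def] using
      (Real.hasDerivAt_rpow_const (p := -(1:ℝ)/3) (Or.inl hpos.ne')).comp l
        ((hasDerivAt_id l).sub_const m)
  have hB := slice1 l m h
  have hVM := slice2 l m h
  have hDd : HasDerivAt (fun l' => deriv (fun m' => v l' m') m)
      (deriv (fun l' => deriv (fun m' => v l' m') m) l) l := hD12.hasDerivAt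
  have hwmul : HasDerivAt (fun l' : ℝ => -(1:ℝ)/3 * (l' - m) ^ (-(1:ℝ)/3 - 1) * (-1))
      (-(1:ℝ)/3 * ((-(1:ℝ)/3 - 1) * (l - m) ^ (-(1:ℝ)/3 - 1 - 1) * 1) * (-1)) l :=
    (hA.const_mul (-(1:ℝ)/3)).mul_const (-1)
  have hD12u : deriv (fun l' => deriv (fun m' => u l' m') m) l
      = (-(1:ℝ)/3 * ((-(1:ℝ)/3 - 1) * (l - m) ^ (-(1:ℝ)/3 - 1 - 1) * 1) * (-1)) * v l m
        + (-(1:ℝ)/3 * (l - m) ^ (-(1:ℝ)/3 - 1) * (-1)) * deriv (fun l' => v l' m) l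
        + (((-(1:ℝ)/3) * (l - m) ^ (-(1:ℝ)/3 - 1) * 1) * deriv (fun m' => v l m') m
          + (l - m) ^ (-(1:ℝ)/3) * deriv (fun l' => deriv (fun m' => v l' m') m) l) := by
    rw [hevEq2.deriv_eq, ((hwmul.fun_mul hB).fun_add (hC.fun_mul hDd)).deriv, hB.deriv, hVM.deriv]
  -- derivative of l' ↦ u l' m at l
  have hu_l : deriv (fun l' => u l' m) l
      = ((-(1:ℝ)/3) * (l - m) ^ (-(1:ℝ)/3 - 1) * 1) * v l m
        + (l - m) ^ (-(1:ℝ)/3) * deriv (fun l' => v l' m) l := by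
    have hfun : (fun l' => u l' m) = fun l' => (l' - m) ^ (-(1:ℝ)/3) * v l' m :=
      funext (fun l' => hu l' m)
    rw [hfun, (hC.fun_mul hB).deriv, hB.deriv]
  have hu_m := step1 l h
  rw [hD12u, hu_l, hu_m]
  -- now pure algebra
  have e1 : (l - m) ^ (-(1:ℝ)/3 - 1) = (l - m) ^ (-(1:ℝ)/3) / (l - m) := by
    rw [Real.rpow_sub hpos, Real.rpow_one]
  have e2 : (l - m) ^ (-(1:ℝ)/3 - 1 - 1) = (l - m) ^ (-(1:ℝ)/3) / (l - m) / (l - m) := by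
    rw [Real.rpow_sub hpos, Real.rpow_sub hpos, Real.rpow_one]
  rw [e1, e2]
  have hane : ((l - m) ^ (-(1:ℝ)/3)) ≠ 0 := (Real.rpow_pos_of_pos hpos _).ne'
  set D := deriv (fun l' => deriv (fun m' => v l' m') m) l with hD
  set VL := deriv (fun l' => v l' m) l with hVL
  set VMv := deriv (fun m' => v l m') m with hVMv
  set V := v l m with hV
  set a := (l - m) ^ (-(1:ℝ)/3) with ha
  set t := l - m with htdef
  have ht0 : t ≠ 0 := hpos.ne'
  clear_value D VL VMv V a t
  constructor
  · intro h0
    linear_combination (norm := (field_simp; ring)) a * h0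
  · intro h0
    have h1 : a * (D + 1 / (6 * t) * (VL - VMv) - 1 / (3 * t ^ 2) * V) = 0 := by
      linear_combination (norm := (field_simp; ring)) h0
    rcases mul_eq_zero.1 h1 with h2 | h2
    · exact absurd h2 hane
    · exact h2
end

section
/- Along either characteristic through (0,b) (b < 0), i.e. on the curve 3(x-a) + 2(-y)^{3/2} = 0 or 3(x+a) - 2(-y)^{3/2} = 0 with a = 2(-b)^{3/2}/3 and b < y < 0, the function E(x,y;0,b) = e^{iπ/6}[9(x²-a²)+4y³-12a(-y)^{3/2}]^{-1/6}·F(1/6,1/6;1;ζ) with ζ = [9(x²-a²)+4y³+12a(-y)^{3/2}]/[9(x²-a²)+4y³-12a(-y)^{3/2}] takes the value 2^{-2/3}(by)^{-1/4}. -/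
open Complex

/-- The Gauss hypergeometric series `F(1/6,1/6;1;·)` on ℂ. -/
noncomputable def hypF16 (ζ : ℂ) : ℂ :=
  ∑' n : ℕ, ((∏ i ∈ Finset.range n, ((1:ℂ)/6 + i))^2 / ((n.factorial : ℂ))^2) * ζ^n

lemma hypF16_zero : hypF16 0 = 1 := by
  unfold hypF16
  rw [tsum_eq_single 0]
  · simp
  · intro n hn; simp [zero_pow hn]

/-- Along either characteristic through `(0,b)` (`b < 0`), for `b < y < 0`, the function
`E(x,y;0,b) = e^{iπ/6} z^{-1/6} F(1/6,1/6;1;ζ)` takes the real value `2^{-2/3}(by)^{-1/4}`. -/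
theorem E_on_characteristics
    (b x y : ℝ) (hb : b < 0) (hby : b < y) (hy : y < 0)
    (a : ℝ) (ha : a = 2 * (-b)^((3:ℝ)/2) / 3)
    (hchar : 3*(x - a) + 2*(-y)^((3:ℝ)/2) = 0 ∨ 3*(x + a) - 2*(-y)^((3:ℝ)/2) = 0)
    (z ζ : ℝ)
    (hz : z = 9*(x^2 - a^2) + 4*y^3 - 12*a*(-y)^((3:ℝ)/2))
    (hζ : ζ = (9*(x^2 - a^2) + 4*y^3 + 12*a*(-y)^((3:ℝ)/2)) / z) :
    Complex.exp (Real.pi/6 * Complex.I) * (z : ℂ) ^ (-(1:ℂ)/6) * hypF16 (ζ : ℂ)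
      = (((2:ℝ)^(-(2:ℝ)/3) * (b*y)^(-(1:ℝ)/4) : ℝ) : ℂ) := by
  set s : ℝ := (-y)^((3:ℝ)/2) with hs
  have hs2 : s^2 = -y^3 := by
    rw [hs, ← Real.rpow_natCast ((-y)^((3:ℝ)/2)) 2,
      ← Real.rpow_mul (by linarith : (0:ℝ) ≤ -y)]
    norm_num
    ring
  have hy3 : y^3 = -s^2 := by linarith
  have hprod : (-b)^((3:ℝ)/2) * (-y)^((3:ℝ)/2) = (b*y)^((3:ℝ)/2) := by
    rw [← Real.mul_rpow (by linarith) (by linarith)]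
    congr 1; ring
  have hz' : z = -24*a*s := by
    rcases hchar with h | h
    · have hx : x = a - 2*s/3 := by linarith
      rw [hz, hx, hy3]; ring
    · have hx : x = -a + 2*s/3 := by linarith
      rw [hz, hx, hy3]; ring
  have hnum : 9*(x^2 - a^2) + 4*y^3 + 12*a*(-y)^((3:ℝ)/2) = 0 := by
    rcases hchar with h | h
    · have hx : x = a - 2*s/3 := by linarith
      rw [hx, hy3, ← hs]; ring
    · have hx : x = -a + 2*s/3 := by linarith
      rw [hx, hy3, ← hs]; ring
  have hζ0 : ζ = 0 := by rw [hζ, hnum, zero_div]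
  have hbypos : 0 < b*y := mul_pos_of_neg_of_neg hb hy
  have hzval : z = -16*(b*y)^((3:ℝ)/2) := by
    rw [hz', ha]; rw [hs]; linarith [hprod]
  have htpos : 0 < (b*y)^((3:ℝ)/2) := Real.rpow_pos_of_pos hbypos _
  have hzneg : z < 0 := by rw [hzval]; nlinarith
  -- complex power of a negative real
  have hlog : Complex.log (z:ℂ) = (Real.log (-z) : ℂ) + Real.pi * Complex.I := by
    simp only [Complex.log, Complex.arg_ofReal_of_neg hzneg, Complex.norm_real, Real.norm_eq_abs,
      abs_of_neg hzneg]
  have hcpow : (z:ℂ) ^ (-(1:ℂ)/6)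
      = Complex.exp (-(Real.log (-z)) / 6 : ℝ) * Complex.exp (-(Real.pi/6) * Complex.I) := by
    rw [Complex.cpow_def_of_ne_zero (by exact_mod_cast hzneg.ne), hlog, ← Complex.exp_add]
    congr 1
    push_cast; ring
  rw [hζ0, Complex.ofReal_zero, hypF16_zero, mul_one, hcpow]
  rw [show Complex.exp ((Real.pi:ℂ)/6 * Complex.I) *
      (Complex.exp (-(Real.log (-z)) / 6 : ℝ) * Complex.exp (-(Real.pi/6) * Complex.I))
      = Complex.exp ((Real.pi:ℂ)/6 * Complex.I + -(Real.pi/6) * Complex.I)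
        * Complex.exp (-(Real.log (-z)) / 6 : ℝ) by rw [Complex.exp_add]; ring]
  rw [show ((Real.pi:ℂ)/6 * Complex.I + -(Real.pi/6) * Complex.I) = 0 by push_cast; ring,
    Complex.exp_zero, one_mul, ← Complex.ofReal_exp]
  have h1 : Real.exp (-(Real.log (-z)) / 6) = (-z) ^ (-(1:ℝ)/6) := by
    rw [Real.rpow_def_of_pos (by linarith)]; ring_nf
  have h16 : (16:ℝ)^(-(1:ℝ)/6) = (2:ℝ)^(-(2:ℝ)/3) := by
    rw [show (16:ℝ) = (2:ℝ)^((4:ℝ)) by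
        rw [show (4:ℝ)=((4:ℕ):ℝ) by norm_num, Real.rpow_natCast]; norm_num,
      ← Real.rpow_mul (by norm_num)]
    norm_num
  have h2 : ((b*y)^((3:ℝ)/2))^(-(1:ℝ)/6) = (b*y)^(-(1:ℝ)/4) := by
    rw [← Real.rpow_mul hbypos.le]; norm_num
  have hreal : Real.exp (-(Real.log (-z)) / 6)
      = (2:ℝ)^(-(2:ℝ)/3) * (b*y)^(-(1:ℝ)/4) := by
    rw [h1, show -z = 16*(b*y)^((3:ℝ)/2) by rw [hzval]; ring,
      Real.mul_rpow (by norm_num) htpos.le, h16, h2]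
  exact_mod_cast congrArg (Complex.ofReal) hreal
end
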